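/- arXiv:1208.5615 — 4 statements merged into one kernel-verified Lean document; each statement's English description precedes it below -/
import Mathlib

section
/- θ_r = ⌊r/2⌋·⌊(r+1)/2⌋ is the maximum eigenvalue of the distance matrix of the cycle C_r, and its eigenspace is one-dimensional, spanned by the all-ones vector. -/
/-! The distance matrix of `C_r` is circulant, with first row `k ↦ min k (r - k)`, so every row
sums to `θ_r = ∑_{k<r} min k (r - k)`. For a nonnegative matrix with constant row sum `s`,
Gershgorin's theorem bounds every real eigenvalue by `s` in absolute value, and the all-ones
vector is an eigenvector for `s`. If moreover all off-diagonal entries are positive, comparing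
the eigen-equation for `s` at a coordinate where an eigenvector is maximal forces it to be constant. -/

open Finset

theorem sum_range_min_sub (r : ℕ) :
    ∑ k ∈ range r, min k (r - k) = r / 2 * ((r + 1) / 2) := by
  induction r using Nat.twoStepInduction with
  | zero => rfl
  | one => rfl
  | more r ih _ =>
    have hshift : ∀ k ∈ range r, min (k + 1) (r + 2 - (k + 1)) = min k (r - k) + 1 := by
      intro k hk
      have := mem_range.mp hk
      omega
    rw [sum_range_succ, sum_range_succ', sum_congr rfl hshift, sum_add_distrib, ih,
      sum_const, card_range, smul_eq_mul, mul_one,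
      show (r + 2) / 2 = r / 2 + 1 by omega, show (r + 2 + 1) / 2 = (r + 1) / 2 + 1 by omega]
    have hhalves : r / 2 + (r + 1) / 2 = r := by omega
    simp only [Nat.zero_le, min_eq_left, show min (r + 1) (r + 2 - (r + 1)) = 1 by omega]
    linarith

theorem Fin.sum_univ_sub_left {α : Type*} [AddCommMonoid α] {r : ℕ} (v : Fin r → α) (i : Fin r) :
    ∑ j, v (i - j) = ∑ k, v k := by
  cases r with
  | zero => exact i.elim0
  | succ r => exact Equiv.sum_comp (Equiv.subLeft i) v

def cycleDist (r : ℕ) (k : Fin r) : ℕ := min k.val (r - k.val)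

theorem sum_cycleDist (r : ℕ) : ∑ k, cycleDist r k = r / 2 * ((r + 1) / 2) := by
  rw [← sum_range_min_sub, ← Fin.sum_univ_eq_sum_range]
  rfl

theorem cycleDist_sub (r : ℕ) (i j : Fin r) :
    cycleDist r (i - j) = min ((i : ℤ) - j).natAbs (r - ((i : ℤ) - j).natAbs) := by
  unfold cycleDist
  rcases le_or_gt j i with h | h
  · rw [Fin.sub_val_of_le h]
    omega
  · rw [Fin.coe_sub_iff_lt.mpr h]
    omega

theorem cycleDist_sub_pos {r : ℕ} {i j : Fin r} (h : i ≠ j) : 0 < cycleDist r (i - j) := by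
  rw [cycleDist_sub]
  have := Fin.val_ne_of_ne h
  omega

namespace Matrix

variable {n : Type*} [Fintype n] {A : Matrix n n ℝ} {s : ℝ}

theorem mulVec_one_of_row_sum (hrow : ∀ i, ∑ j, A i j = s) : A *ᵥ 1 = s • 1 := by
  ext i
  simp [mulVec, dotProduct, hrow]

theorem abs_le_of_mulVec_eq_smul_of_row_sum [DecidableEq n] (hA : ∀ i j, 0 ≤ A i j)
    (hrow : ∀ i, ∑ j, A i j = s) {μ : ℝ} {v : n → ℝ} (hv : v ≠ 0) (hμ : A *ᵥ v = μ • v) :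
    |μ| ≤ s := by
  have hμ' : Module.End.HasEigenvalue (toLin' A) μ :=
    Module.End.hasEigenvalue_of_hasEigenvector
      ⟨Module.End.mem_eigenspace_iff.mpr (by rwa [toLin'_apply]), hv⟩
  obtain ⟨k, hk⟩ := eigenvalue_mem_ball hμ'
  have hradius : ∑ j ∈ univ.erase k, ‖A k j‖ = s - A k k := by
    simp_rw [Real.norm_of_nonneg (hA k _), ← hrow k, ← add_sum_erase univ (A k) (mem_univ k)]
    ring
  rw [Metric.mem_closedBall, Real.dist_eq, hradius] at hk
  obtain ⟨hlower, hupper⟩ := abs_le.mp hk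
  exact abs_le.mpr ⟨by linarith [hA k k], by linarith⟩

theorem exists_eq_smul_one_of_mulVec_eq_smul_of_row_sum (hA : ∀ i j, 0 ≤ A i j)
    (hpos : ∀ i j, i ≠ j → 0 < A i j) (hrow : ∀ i, ∑ j, A i j = s) {v : n → ℝ}
    (hv : A *ᵥ v = s • v) : ∃ c : ℝ, v = c • 1 := by
  rcases isEmpty_or_nonempty n with _ | _
  · exact ⟨0, Subsingleton.elim _ _⟩
  obtain ⟨i, hi⟩ := Finite.exists_max v
  have hrow_i : ∑ j, A i j * v j = s * v i := by
    simpa only [mulVec, dotProduct, Pi.smul_apply, smul_eq_mul] using congrFun hv i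
  have hzero : ∑ j, A i j * (v i - v j) = 0 := by
    simp only [mul_sub, sum_sub_distrib, ← sum_mul, hrow, hrow_i, sub_self]
  have hterm := (sum_eq_zero_iff_of_nonneg fun j _ =>
    mul_nonneg (hA i j) (sub_nonneg.mpr (hi j))).mp hzero
  refine ⟨v i, funext fun j => ?_⟩
  obtain rfl | hij := eq_or_ne i j
  · simp
  · have hj := (mul_eq_zero.mp (hterm j (mem_univ j))).resolve_left (hpos i j hij).ne'
    simpa using (sub_eq_zero.mp hj).symm

end Matrix

theorem cycle_distance_matrix_max_eigenvalue_general (r : ℕ)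
    (D : Matrix (Fin r) (Fin r) ℝ)
    (hD : ∀ i j : Fin r, D i j =
      (min ((i.val : ℤ) - j.val).natAbs (r - ((i.val : ℤ) - j.val).natAbs) : ℝ))
    (θ : ℝ) (hθ : θ = ((r / 2) * ((r + 1) / 2) : ℕ)) :
    (D.mulVec (fun _ => 1) = θ • (fun _ => 1 : Fin r → ℝ)) ∧
    (∀ μ : ℝ, (∃ v : Fin r → ℝ, v ≠ 0 ∧ D.mulVec v = μ • v) → μ ≤ θ) ∧
    (∀ v : Fin r → ℝ, D.mulVec v = θ • v → ∃ c : ℝ, v = c • (fun _ => 1 : Fin r → ℝ)) := by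
  have hDc : D = Matrix.circulant fun k => (cycleDist r k : ℝ) := by
    ext i j
    have : ((i : ℤ) - j).natAbs ≤ r := by omega
    rw [hD, Matrix.circulant_apply, cycleDist_sub, Nat.cast_min, Nat.cast_sub this]
  have hA : ∀ i j, 0 ≤ D i j := fun i j => by rw [hDc, Matrix.circulant_apply]; positivity
  have hpos : ∀ i j, i ≠ j → 0 < D i j := fun i j h => by
    rw [hDc, Matrix.circulant_apply]
    exact_mod_cast cycleDist_sub_pos h
  have hrow : ∀ i, ∑ j, D i j = θ := fun i => by
    simp only [hDc, Matrix.circulant_apply]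
    rw [Fin.sum_univ_sub_left (fun k => (cycleDist r k : ℝ)), ← Nat.cast_sum, sum_cycleDist, hθ]
  refine ⟨Matrix.mulVec_one_of_row_sum hrow, ?_, fun v hv =>
    Matrix.exists_eq_smul_one_of_mulVec_eq_smul_of_row_sum hA hpos hrow hv⟩
  rintro μ ⟨v, hv, hμ⟩
  exact (le_abs_self μ).trans (Matrix.abs_le_of_mulVec_eq_smul_of_row_sum hA hrow hv hμ)

/-- `θ_r = ⌊r/2⌋·⌊(r+1)/2⌋` is the maximum eigenvalue of the distance matrix of the
cycle `C_r`, and its eigenspace is one-dimensional, spanned by the all-ones vector. -/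
theorem cycle_distance_matrix_max_eigenvalue (r : ℕ) (hr : 3 ≤ r)
    (D : Matrix (Fin r) (Fin r) ℝ)
    (hD : ∀ i j : Fin r, D i j =
      (min ((i.val : ℤ) - j.val).natAbs (r - ((i.val : ℤ) - j.val).natAbs) : ℝ))
    (θ : ℝ) (hθ : θ = ((r / 2) * ((r + 1) / 2) : ℕ)) :
    (D.mulVec (fun _ => 1) = θ • (fun _ => 1 : Fin r → ℝ)) ∧
    (∀ μ : ℝ, (∃ v : Fin r → ℝ, v ≠ 0 ∧ D.mulVec v = μ • v) → μ ≤ θ) ∧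
    (∀ v : Fin r → ℝ, D.mulVec v = θ • v → ∃ c : ℝ, v = c • (fun _ => 1 : Fin r → ℝ)) :=
  cycle_distance_matrix_max_eigenvalue_general r D hD θ hθ
end

section
/- Let G = H·K be the coalescence of rooted graphs (H,x) and (K,y) (identify x with y), with weight functions α on H and β on K and combined weight function γ. Then M_G^γ = M_H^α + M_K^β + M_H^{ξ}(x) + M_K^{η}(y), where ξ = (|V_K|-1)α + B, η = (|V_H|-1)β + A, A = Σ_{u∈V_H} α(u), B = Σ_{v∈V_K} β(v). -/
/-!
Every vertex of `G` comes from `H` or from `K`, and only the glued vertex from both, so a sum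
over `V_G` is the sum over `V_H` plus the sum over `V_K` minus the glued term. For a
`γ`-weighted sum the correction vanishes, because `γ` puts `α x + β y` on the glued vertex.
Hence the `γ`-moment at a vertex `u₀` of `H` is its `α`-moment in `H` plus a `β`-moment of
`K` taken through the cut vertex, `B · d(u₀, x) + M_K^β(y)`, and symmetrically for `K`;
summing these and removing the doubly counted vertex leaves the two `(|V|-1)`-corrections.
-/

open Finset

structure IsGluing {VH VK VG : Type*} (iH : VH → VG) (iK : VK → VG) (x : VH) (y : VK) :
    Prop where
  injective_left : Function.Injective iH
  injective_right : Function.Injective iK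
  glue : iH x = iK y
  cover : ∀ w, (∃ u, w = iH u) ∨ ∃ v, w = iK v
  eq_of_left_eq_right : ∀ u v, iH u = iK v → u = x ∧ v = y

namespace IsGluing

variable {VH VK VG : Type*} [Fintype VH] [Fintype VK] [Fintype VG]
  {iH : VH → VG} {iK : VK → VG} {x : VH} {y : VK}

theorem sum_eq {M : Type*} [AddCommGroup M] (h : IsGluing iH iK x y) (F : VG → M) :
    ∑ w, F w = ∑ u, F (iH u) + ∑ v, F (iK v) - F (iH x) := by
  classical
  have hunion : univ.image iH ∪ univ.image iK = univ :=
    eq_univ_of_forall fun w => by rcases h.cover w with ⟨u, rfl⟩ | ⟨v, rfl⟩ <;> simp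
  have hinter : univ.image iH ∩ univ.image iK = {iH x} := by
    ext w
    simp only [mem_inter, mem_image, mem_univ, true_and, mem_singleton]
    constructor
    · rintro ⟨⟨u, rfl⟩, v, hvu⟩
      rw [(h.eq_of_left_eq_right u v hvu.symm).1]
    · rintro rfl
      exact ⟨⟨x, rfl⟩, y, h.glue.symm⟩
  have := sum_union_inter (s₁ := univ.image iH) (s₂ := univ.image iK) (f := F)
  rw [hunion, hinter, sum_singleton, sum_image h.injective_left.injOn,
    sum_image h.injective_right.injOn] at this
  rw [← this, add_sub_cancel_right]

theorem sum_mul_eq {R : Type*} [CommRing R] (h : IsGluing iH iK x y)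
    {α : VH → R} {β : VK → R} {γ : VG → R}
    (hγH : ∀ u, u ≠ x → γ (iH u) = α u) (hγK : ∀ v, v ≠ y → γ (iK v) = β v)
    (hγx : γ (iH x) = α x + β y) (g : VG → R) :
    ∑ w, γ w * g w = ∑ u, α u * g (iH u) + ∑ v, β v * g (iK v) := by
  classical
  have hγH' : ∀ u, γ (iH u) = α u + if u = x then β y else 0 := by
    intro u
    split_ifs with hu
    · rw [hu, hγx]
    · rw [hγH u hu, add_zero]
  have hγK' : ∀ v, γ (iK v) = β v + if v = y then α x else 0 := by
    intro v
    split_ifs with hv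
    · rw [hv, ← h.glue, hγx, add_comm]
    · rw [hγK v hv, add_zero]
  simp only [h.sum_eq, hγH', hγK', add_mul, sum_add_distrib, ite_mul, zero_mul, sum_ite_eq',
    mem_univ, if_true, ← h.glue]
  ring

end IsGluing

theorem sum_mul_dist_add_sum_mul_dist_eq {VH VK VG R : Type*} [Fintype VH] [Fintype VK]
    [CommRing R] {G : SimpleGraph VG} {H : SimpleGraph VH} {K : SimpleGraph VK}
    {iH : VH → VG} {iK : VK → VG} {x : VH} {y : VK}
    (hdH : ∀ u u', G.dist (iH u) (iH u') = H.dist u u')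
    (hcross : ∀ u v, G.dist (iH u) (iK v) = H.dist u x + K.dist v y)
    (α : VH → R) (β : VK → R) (u₀ : VH) :
    ∑ u, α u * (G.dist (iH u₀) (iH u) : R) + ∑ v, β v * (G.dist (iH u₀) (iK v) : R) =
      ∑ u, α u * (H.dist u₀ u : R) + (∑ v, β v) * H.dist u₀ x + ∑ v, β v * (K.dist v y : R) := by
  simp only [hdH, hcross, Nat.cast_add, mul_add, sum_add_distrib, sum_mul, add_assoc]

theorem coalescence_moment_general
    {VH VK VG : Type*} [Fintype VH] [Fintype VK] [Fintype VG]
    (H : SimpleGraph VH) (K : SimpleGraph VK) (G : SimpleGraph VG)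
    (x : VH) (y : VK) (iH : VH → VG) (iK : VK → VG)
    (hiH : Function.Injective iH) (hiK : Function.Injective iK)
    (hxy : iH x = iK y)
    (hcover : ∀ w : VG, (∃ u, w = iH u) ∨ (∃ v, w = iK v))
    (hdisj : ∀ u v, iH u = iK v → u = x ∧ v = y)
    (hdH : ∀ u u', G.dist (iH u) (iH u') = H.dist u u')
    (hdK : ∀ v v', G.dist (iK v) (iK v') = K.dist v v')
    (hcross : ∀ u v, G.dist (iH u) (iK v) = H.dist u x + K.dist y v)
    (α : VH → ℝ) (β : VK → ℝ)
    (γ : VG → ℝ)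
    (hγH : ∀ u, u ≠ x → γ (iH u) = α u)
    (hγK : ∀ v, v ≠ y → γ (iK v) = β v)
    (hγx : γ (iH x) = α x + β y) :
    ∑ w : VG, ∑ w' : VG, γ w' * (G.dist w w' : ℝ) =
      (∑ u : VH, ∑ u' : VH, α u' * (H.dist u u' : ℝ))
      + (∑ v : VK, ∑ v' : VK, β v' * (K.dist v v' : ℝ))
      + (∑ u : VH, (((Fintype.card VK : ℝ) - 1) * α u + ∑ v : VK, β v)
          * (H.dist u x : ℝ))
      + (∑ v : VK, (((Fintype.card VH : ℝ) - 1) * β v + ∑ u : VH, α u)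
          * (K.dist v y : ℝ)) := by
  have hG : IsGluing iH iK x y := ⟨hiH, hiK, hxy, hcover, hdisj⟩
  have hcrossH : ∀ u v, G.dist (iH u) (iK v) = H.dist u x + K.dist v y := fun u v => by
    rw [hcross, K.dist_comm]
  have hcrossK : ∀ v u, G.dist (iK v) (iH u) = K.dist v y + H.dist u x := fun v u => by
    rw [G.dist_comm, hcrossH, add_comm]
  have hmomentH := sum_mul_dist_add_sum_mul_dist_eq hdH hcrossH α β
  have hmomentK v := (add_comm _ _).trans (sum_mul_dist_add_sum_mul_dist_eq hdK hcrossK β α v)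
  have hx : ∑ u, α u * (H.dist x u : ℝ) = ∑ u, α u * (H.dist u x : ℝ) :=
    sum_congr rfl fun u _ => by rw [H.dist_comm]
  simp only [hG.sum_mul_eq hγH hγK hγx]
  rw [hG.sum_eq]
  simp only [hmomentH, hmomentK, H.dist_self, Nat.cast_zero, mul_zero, add_zero, hx,
    sum_add_distrib, sum_sub_distrib, sum_const, card_univ, nsmul_eq_mul, add_mul, sub_mul,
    one_mul, mul_assoc, ← mul_sum]
  ring

/-- Moment of the coalescence `G = H·K` of rooted graphs `(H,x)`, `(K,y)`:
`M_G^γ = M_H^α + M_K^β + M_H^ξ(x) + M_K^η(y)` with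
`ξ = (|V_K|-1)α + B` and `η = (|V_H|-1)β + A`. -/
theorem coalescence_moment
    {VH VK VG : Type*} [Fintype VH] [Fintype VK] [Fintype VG]
    (H : SimpleGraph VH) (K : SimpleGraph VK) (G : SimpleGraph VG)
    (hH : H.Connected) (hK : K.Connected)
    (x : VH) (y : VK) (iH : VH → VG) (iK : VK → VG)
    (hiH : Function.Injective iH) (hiK : Function.Injective iK)
    (hxy : iH x = iK y)
    (hcover : ∀ w : VG, (∃ u, w = iH u) ∨ (∃ v, w = iK v))
    (hdisj : ∀ u v, iH u = iK v → u = x ∧ v = y)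
    (hdH : ∀ u u', G.dist (iH u) (iH u') = H.dist u u')
    (hdK : ∀ v v', G.dist (iK v) (iK v') = K.dist v v')
    (hcross : ∀ u v, G.dist (iH u) (iK v) = H.dist u x + K.dist y v)
    (α : VH → ℝ) (β : VK → ℝ) (hα : ∀ u, 0 ≤ α u) (hβ : ∀ v, 0 ≤ β v)
    (γ : VG → ℝ)
    (hγH : ∀ u, u ≠ x → γ (iH u) = α u)
    (hγK : ∀ v, v ≠ y → γ (iK v) = β v)
    (hγx : γ (iH x) = α x + β y) :
    ∑ w : VG, ∑ w' : VG, γ w' * (G.dist w w' : ℝ) =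
      (∑ u : VH, ∑ u' : VH, α u' * (H.dist u u' : ℝ))
      + (∑ v : VK, ∑ v' : VK, β v' * (K.dist v v' : ℝ))
      + (∑ u : VH, (((Fintype.card VK : ℝ) - 1) * α u + ∑ v : VK, β v)
          * (H.dist u x : ℝ))
      + (∑ v : VK, (((Fintype.card VH : ℝ) - 1) * β v + ∑ u : VH, α u)
          * (K.dist v y : ℝ)) :=
  coalescence_moment_general H K G x y iH iK hiH hiK hxy hcover hdisj hdH hdK hcross α β γ hγH hγK
    hγx
end

section
/- Let H have vertices x_1,...,x_r and K have vertices y_1,...,y_r, with weight functions α and β of total weights A and B respectively. For any permutation σ of {1,...,r}, let G_σ be the graft product identifying x_i with y_{σ(i)} in the i-th copy of K. Then M_{G_σ}^γ = r·M_H^α + r²·M_K^β + rB·M_H^1 + (A+(r-1)B)·M_K^1. In particular, M_{G_σ}^γ does not depend on σ. -/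
/-!
Index the vertices of `G_σ` by pairs `(i, v)`, vertex `v` of the `i`-th copy of `K`, so that
`x_i = (i, σ i)`. The `α`-part of the moment only has glued vertices as targets; the `β`-part
factors into products of one-variable sums, up to a correction on pairs inside one copy. In each
of the resulting sums `σ` merely reindexes a full sum over the vertices of `K`, so it drops out.
-/

open Finset

def distMoment {V : Type*} [Fintype V] (w : V → ℝ) (d : V → V → ℝ) : ℝ :=
  ∑ u, ∑ v, w v * d u v

theorem distMoment_equiv_comp {V W : Type*} [Fintype V] [Fintype W] (e : W ≃ V)
    (w : V → ℝ) (d : V → V → ℝ) :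
    distMoment (w ∘ e) (fun p q => d (e p) (e q)) = distMoment w d :=
  Fintype.sum_equiv e _ _ fun _ => Fintype.sum_equiv e _ _ fun _ => rfl

theorem sum_sum_comp_perm_right {ι : Type*} [Fintype ι] (σ : Equiv.Perm ι)
    (f : ι → ι → ℝ) :
    ∑ i, ∑ v, f v (σ i) = ∑ v, ∑ v', f v v' := by
  rw [sum_comm]
  exact sum_congr rfl fun v _ => Equiv.sum_comp σ (f v)

namespace Graft

variable {ι : Type*} [DecidableEq ι]

def dist (dH dK : ι → ι → ℝ) (σ : Equiv.Perm ι) (p q : ι × ι) : ℝ :=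
  if p.1 = q.1 then dK p.2 q.2 else dK p.2 (σ p.1) + dH p.1 q.1 + dK (σ q.1) q.2

def weight (α β : ι → ℝ) (σ : Equiv.Perm ι) (q : ι × ι) : ℝ :=
  β q.2 + if q.2 = σ q.1 then α q.1 else 0

variable {dH dK : ι → ι → ℝ} (σ : Equiv.Perm ι)

theorem dist_eq_sub (hH : ∀ i, dH i i = 0) (p q : ι × ι) :
    dist dH dK σ p q = dK p.2 (σ p.1) + dH p.1 q.1 + dK (σ q.1) q.2
      - if p.1 = q.1 then dK p.2 (σ p.1) + dK (σ p.1) q.2 - dK p.2 q.2 else 0 := by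
  unfold dist
  split_ifs with h
  · rw [h, hH]; ring
  · ring

theorem dist_attach (hH : ∀ i, dH i i = 0) (hK : ∀ a, dK a a = 0) (p : ι × ι) (j : ι) :
    dist dH dK σ p (j, σ j) = dK p.2 (σ p.1) + dH p.1 j := by
  unfold dist
  split_ifs with h
  · simp [h, hH]
  · simp [hK]

section Moment

variable [Fintype ι]

theorem distMoment_weight (α β : ι → ℝ) (d : ι × ι → ι × ι → ℝ) :
    distMoment (weight α β σ) d =
      distMoment (β ∘ Prod.snd) d + ∑ p, ∑ j, α j * d p (j, σ j) := by
  simp only [distMoment, weight, add_mul, sum_add_distrib, Fintype.sum_prod_type, ite_mul,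
    zero_mul, Function.comp_apply, sum_ite_eq']
  simp

theorem sum_mul_dist_attach (α : ι → ℝ) (hH : ∀ i, dH i i = 0) (hK : ∀ a, dK a a = 0) :
    ∑ p, ∑ j, α j * dist dH dK σ p (j, σ j) =
      Fintype.card ι * distMoment α dH + (∑ j, α j) * distMoment (fun _ => 1) dK := by
  simp only [dist_attach σ hH hK, mul_add, sum_add_distrib, Fintype.sum_prod_type, distMoment]
  simp only [← sum_mul, sum_const, card_univ, nsmul_eq_mul, one_mul, ← mul_sum,
    sum_sum_comp_perm_right]
  ring

theorem distMoment_comp_snd_dist (β : ι → ℝ) (hH : ∀ i, dH i i = 0) :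
    distMoment (β ∘ Prod.snd) (dist dH dK σ) =
      (Fintype.card ι : ℝ) ^ 2 * distMoment β dK
      + Fintype.card ι * (∑ v, β v) * distMoment (fun _ => 1) dH
      + ((Fintype.card ι : ℝ) - 1) * (∑ v, β v) * distMoment (fun _ => 1) dK := by
  simp only [distMoment, dist_eq_sub σ hH, Function.comp_apply, Fintype.sum_prod_type, mul_sub,
    mul_add, sum_add_distrib, sum_sub_distrib, mul_ite, mul_zero, sum_ite_irrel, sum_const_zero,
    sum_ite_eq, mem_univ, if_true]
  simp only [← sum_mul, ← mul_sum, sum_const, card_univ, nsmul_eq_mul, one_mul]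
  rw [sum_sum_comp_perm_right, Equiv.sum_comp σ (fun u => ∑ v, β v * dK u v)]
  ring

theorem distMoment_weight_dist (α β : ι → ℝ) (hH : ∀ i, dH i i = 0)
    (hK : ∀ a, dK a a = 0) :
    distMoment (weight α β σ) (dist dH dK σ) =
      Fintype.card ι * distMoment α dH + (Fintype.card ι : ℝ) ^ 2 * distMoment β dK
      + Fintype.card ι * (∑ v, β v) * distMoment (fun _ => 1) dH
      + ((∑ u, α u) + ((Fintype.card ι : ℝ) - 1) * (∑ v, β v))
          * distMoment (fun _ => 1) dK := by
  rw [distMoment_weight, distMoment_comp_snd_dist σ β hH, sum_mul_dist_attach σ α hH hK]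
  ring

end Moment

section Embedding

variable {V : Type*} {iH : ι → V} {iK : ι → ι → V} {σ : Equiv.Perm ι}

theorem injective_uncurry (hiH : Function.Injective iH) (hiK : ∀ i, Function.Injective (iK i))
    (hxy : ∀ i, iH i = iK i (σ i))
    (hdisj : ∀ i j v v', i ≠ j → iK i v = iK j v' → v = σ i ∧ v' = σ j) :
    Function.Injective (Function.uncurry iK) := by
  rintro ⟨i, v⟩ ⟨j, v'⟩ h
  by_cases hij : i = j
  · subst hij
    exact Prod.ext rfl (hiK i h)
  · obtain ⟨rfl, rfl⟩ := hdisj i j v v' hij h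
    rw [Function.uncurry_apply_pair, Function.uncurry_apply_pair, ← hxy, ← hxy] at h
    exact absurd (hiH h) hij

omit [DecidableEq ι] in
theorem surjective_uncurry (hxy : ∀ i, iH i = iK i (σ i))
    (hcover : ∀ w : V, (∃ u, w = iH u) ∨ (∃ i v, w = iK i v)) :
    Function.Surjective (Function.uncurry iK) := by
  intro w
  rcases hcover w with ⟨u, rfl⟩ | ⟨i, v, rfl⟩
  · exact ⟨(u, σ u), (hxy u).symm⟩
  · exact ⟨(i, v), rfl⟩

theorem apply_uncurry_eq_weight {α β : ι → ℝ} {γ : V → ℝ}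
    (hxy : ∀ i, iH i = iK i (σ i))
    (hγH : ∀ i, γ (iH i) = α i + β (σ i)) (hγK : ∀ i v, v ≠ σ i → γ (iK i v) = β v)
    (p : ι × ι) : γ (Function.uncurry iK p) = weight α β σ p := by
  obtain ⟨i, v⟩ := p
  by_cases h : v = σ i
  · subst h
    rw [Function.uncurry_apply_pair, ← hxy, hγH, weight, if_pos rfl, add_comm]
  · rw [Function.uncurry_apply_pair, hγK i v h, weight, if_neg h, add_zero]

theorem graph_dist_uncurry_eq_dist {G : SimpleGraph V} {H K : SimpleGraph ι}
    (hdK : ∀ i v v', G.dist (iK i v) (iK i v') = K.dist v v')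
    (hcrossKK : ∀ i j v v', i ≠ j →
      G.dist (iK i v) (iK j v') = K.dist v (σ i) + H.dist i j + K.dist (σ j) v')
    (p q : ι × ι) :
    (G.dist (Function.uncurry iK p) (Function.uncurry iK q) : ℝ) =
      dist (fun u u' => H.dist u u') (fun v v' => K.dist v v') σ p q := by
  obtain ⟨i, v⟩ := p
  obtain ⟨j, v'⟩ := q
  by_cases h : i = j
  · subst h
    simp [dist, hdK]
  · simp [dist, h, hcrossKK i j v v' h]

end Embedding

end Graft

open Graft in
theorem graft_permutation_moment_general
    {r : ℕ} {VG : Type*} [Fintype VG]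
    (H K : SimpleGraph (Fin r)) (G : SimpleGraph VG)
    (σ : Equiv.Perm (Fin r))
    (iH : Fin r → VG) (iK : Fin r → Fin r → VG)
    (hiH : Function.Injective iH) (hiK : ∀ i, Function.Injective (iK i))
    (hxy : ∀ i, iH i = iK i (σ i))
    (hcover : ∀ w : VG, (∃ u, w = iH u) ∨ (∃ i v, w = iK i v))
    (hdisjKK : ∀ i j v v', i ≠ j → iK i v = iK j v' → v = σ i ∧ v' = σ j)
    (hdK : ∀ i v v', G.dist (iK i v) (iK i v') = K.dist v v')
    (hcrossKK : ∀ i j v v', i ≠ j →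
      G.dist (iK i v) (iK j v') =
        K.dist v (σ i) + H.dist i j + K.dist (σ j) v')
    (α β : Fin r → ℝ)
    (γ : VG → ℝ)
    (hγH : ∀ i, γ (iH i) = α i + β (σ i))
    (hγK : ∀ i v, v ≠ σ i → γ (iK i v) = β v) :
    ∑ w : VG, ∑ w' : VG, γ w' * (G.dist w w' : ℝ) =
      r * (∑ u, ∑ u', α u' * (H.dist u u' : ℝ))
      + (r : ℝ) ^ 2 * (∑ v, ∑ v', β v' * (K.dist v v' : ℝ))
      + r * (∑ v, β v) * (∑ u, ∑ u', (H.dist u u' : ℝ))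
      + ((∑ u, α u) + ((r : ℝ) - 1) * (∑ v, β v))
          * (∑ v, ∑ v', (K.dist v v' : ℝ)) := by
  let e : Fin r × Fin r ≃ VG := Equiv.ofBijective (Function.uncurry iK)
    ⟨injective_uncurry hiH hiK hxy hdisjKK, surjective_uncurry hxy hcover⟩
  have hmoment := distMoment_equiv_comp e γ (fun w w' => (G.dist w w' : ℝ))
  have hγ : γ ∘ e = weight α β σ := funext (apply_uncurry_eq_weight hxy hγH hγK)
  have hd : (fun p q => (G.dist (e p) (e q) : ℝ)) =
      dist (fun u u' => H.dist u u') (fun v v' => K.dist v v') σ :=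
    funext₂ (graph_dist_uncurry_eq_dist hdK hcrossKK)
  rw [hγ, hd, distMoment_weight_dist σ α β (by simp) (by simp)] at hmoment
  simpa only [distMoment, Fintype.card_fin, one_mul] using hmoment.symm

/-- Corollary: for the graft product `G_σ` attaching a copy of `K` at each vertex
`x_i` of `H` via the identification `x_i = y_{σ(i)}`,
`M_{G_σ}^γ = r·M_H^α + r²·M_K^β + rB·M_H^1 + (A+(r-1)B)·M_K^1`;
in particular the moment does not depend on `σ`. -/
theorem graft_permutation_moment
    {r : ℕ} {VG : Type*} [Fintype VG]
    (H K : SimpleGraph (Fin r)) (G : SimpleGraph VG)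
    (hH : H.Connected) (hK : K.Connected)
    (σ : Equiv.Perm (Fin r))
    (iH : Fin r → VG) (iK : Fin r → Fin r → VG)
    (hiH : Function.Injective iH) (hiK : ∀ i, Function.Injective (iK i))
    (hxy : ∀ i, iH i = iK i (σ i))
    (hcover : ∀ w : VG, (∃ u, w = iH u) ∨ (∃ i v, w = iK i v))
    (hdisjHK : ∀ i u v, iH u = iK i v → u = i ∧ v = σ i)
    (hdisjKK : ∀ i j v v', i ≠ j → iK i v = iK j v' → v = σ i ∧ v' = σ j)
    (hdH : ∀ u u', G.dist (iH u) (iH u') = H.dist u u')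
    (hdK : ∀ i v v', G.dist (iK i v) (iK i v') = K.dist v v')
    (hcross : ∀ i u v, G.dist (iH u) (iK i v) = H.dist u i + K.dist (σ i) v)
    (hcrossKK : ∀ i j v v', i ≠ j →
      G.dist (iK i v) (iK j v') =
        K.dist v (σ i) + H.dist i j + K.dist (σ j) v')
    (α β : Fin r → ℝ) (hα : ∀ u, 0 ≤ α u) (hβ : ∀ v, 0 ≤ β v)
    (γ : VG → ℝ)
    (hγH : ∀ i, γ (iH i) = α i + β (σ i))
    (hγK : ∀ i v, v ≠ σ i → γ (iK i v) = β v) :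
    ∑ w : VG, ∑ w' : VG, γ w' * (G.dist w w' : ℝ) =
      r * (∑ u, ∑ u', α u' * (H.dist u u' : ℝ))
      + (r : ℝ) ^ 2 * (∑ v, ∑ v', β v' * (K.dist v v' : ℝ))
      + r * (∑ v, β v) * (∑ u, ∑ u', (H.dist u u' : ℝ))
      + ((∑ u, α u) + ((r : ℝ) - 1) * (∑ v, β v))
          * (∑ v, ∑ v', (K.dist v v' : ℝ)) :=
  graft_permutation_moment_general H K G σ iH iK hiH hiK hxy hcover hdisjKK hdK hcrossKK α β γ hγH
    hγK
end

section
/- Let G_1 be the graft product attaching r copies of K at vertices x_1,...,x_r of H (via the same root y of K) and G_2 the product attaching all r copies at a single vertex x of H. Then with γ = α + β + ... + β, M_{G_2}^γ − M_{G_1}^γ = Σ_{i=1}^r [M_H^ξ(x) − M_H^ξ(x_i)] − B(|V_K|−1)·Σ_{i,j=1}^r dist_H(x_i,x_j), where ξ = (|V_K|−1)α + B and B is the total weight of K. In particular the difference depends on K only through |V_K| and B. -/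
/-!
Seen from a vertex `v` of the `i`-th copy of `K`, every vertex outside that copy lies behind
the root `p i`, so the moment at `v` is the moment at the root plus `d_K(v, y)` times the weight
outside the copy, up to a correction that involves `K` alone. Summing over all vertices, the total
moment of a graft is a quantity independent of the attachment map `p`, plus
`∑_j M_H^ξ(p j) + B (|V_K| - 1) ∑_{i,j} d_H(p i, p j)`. For `G₂` the last double sum vanishes.
-/

open Finset

theorem sum_card_filter_mul {r : ℕ} {V : Type*} [Fintype V] [DecidableEq V] (p : Fin r → V)
    (g : V → ℝ) : ∑ u, (#{i | p i = u} : ℝ) * g u = ∑ i, g (p i) := by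
  simp_rw [← Finset.sum_fiberwise' univ p g, sum_const, nsmul_eq_mul]

namespace SimpleGraph

variable {r : ℕ} {VH VK VG : Type*}

/-- `G` is `H` with `r` copies of `K` attached, the root `y` of the `i`-th copy being identified
with `p i`; `iH` and `iK i` embed `H` and the `i`-th copy into `G`. -/
structure IsGraft (H : SimpleGraph VH) (K : SimpleGraph VK) (G : SimpleGraph VG)
    (p : Fin r → VH) (y : VK) (iH : VH → VG) (iK : Fin r → VK → VG) : Prop where
  injective_base : Function.Injective iH
  injective_copy : ∀ i, Function.Injective (iK i)
  base_eq_root : ∀ i, iH (p i) = iK i y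
  cover : ∀ w, (∃ u, w = iH u) ∨ ∃ i v, w = iK i v
  eq_of_base_eq_copy : ∀ i u v, iH u = iK i v → u = p i ∧ v = y
  eq_of_copy_eq_copy : ∀ i j v v', i ≠ j → iK i v = iK j v' → v = y ∧ v' = y
  dist_base : ∀ u u', G.dist (iH u) (iH u') = H.dist u u'
  dist_copy : ∀ i v v', G.dist (iK i v) (iK i v') = K.dist v v'
  dist_base_copy : ∀ i u v, G.dist (iH u) (iK i v) = H.dist u (p i) + K.dist y v
  dist_copy_copy : ∀ i j v v', i ≠ j →
    G.dist (iK i v) (iK j v') = K.dist v y + H.dist (p i) (p j) + K.dist y v'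

noncomputable def moment {V : Type*} [Fintype V] (G : SimpleGraph V) (γ : V → ℝ) (w : V) : ℝ :=
  ∑ w', γ w' * G.dist w w'

namespace IsGraft

variable [Fintype VH] [Fintype VK] [Fintype VG] [DecidableEq VK]
  {H : SimpleGraph VH} {K : SimpleGraph VK} {G : SimpleGraph VG} {p : Fin r → VH} {y : VK}
  {iH : VH → VG} {iK : Fin r → VK → VG}

theorem sum_eq (hG : IsGraft H K G p y iH iK) (f : VG → ℝ) :
    ∑ w, f w = ∑ u, f (iH u) + ∑ i, ∑ v ∈ univ.erase y, f (iK i v) := by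
  let F : VH ⊕ (Fin r × {v : VK // v ≠ y}) → VG := Sum.elim iH fun q => iK q.1 q.2
  have hF : F.Bijective := by
    constructor
    · rintro (u | ⟨i, v, hv⟩) (u' | ⟨i', v', hv'⟩) h <;>
        simp only [F, Sum.elim_inl, Sum.elim_inr] at h
      · exact congrArg Sum.inl (hG.injective_base h)
      · exact absurd (hG.eq_of_base_eq_copy _ _ _ h).2 hv'
      · exact absurd (hG.eq_of_base_eq_copy _ _ _ h.symm).2 hv
      · obtain rfl | hne := eq_or_ne i i'
        · simp [hG.injective_copy i h]
        · exact absurd (hG.eq_of_copy_eq_copy _ _ _ _ hne h).1 hv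
    · intro w
      obtain ⟨u, rfl⟩ | ⟨i, v, rfl⟩ := hG.cover w
      · exact ⟨Sum.inl u, rfl⟩
      · obtain rfl | hv := eq_or_ne v y
        · exact ⟨Sum.inl (p i), hG.base_eq_root i⟩
        · exact ⟨Sum.inr ⟨i, v, hv⟩, rfl⟩
  rw [← Fintype.sum_bijective F hF _ _ fun _ => rfl, Fintype.sum_sum_type, Fintype.sum_prod_type]
  congr 1
  refine sum_congr rfl fun i _ => ?_
  exact (sum_subtype (univ.erase y) (by simp) fun v => f (iK i v)).symm

theorem sum_weight [DecidableEq VH] (hG : IsGraft H K G p y iH iK) {α : VH → ℝ} {β : VK → ℝ}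
    {γ : VG → ℝ} (hγH : ∀ u, γ (iH u) = α u + (#{i | p i = u} : ℝ) * β y)
    (hγK : ∀ i v, v ≠ y → γ (iK i v) = β v) :
    ∑ w, γ w = ∑ u, α u + r * ∑ v, β v := by
  have hcopy (i : Fin r) : ∑ v ∈ univ.erase y, γ (iK i v) = ∑ v ∈ univ.erase y, β v :=
    sum_congr rfl fun v hv => hγK i v (ne_of_mem_erase hv)
  have hβ : β y + ∑ v ∈ univ.erase y, β v = ∑ v, β v := add_sum_erase _ _ (mem_univ y)
  rw [hG.sum_eq]
  simp only [hγH, hcopy, sum_add_distrib, sum_card_filter_mul, sum_const, card_univ,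
    Fintype.card_fin, nsmul_eq_mul, ← hβ]
  ring

theorem moment_base [DecidableEq VH] (hG : IsGraft H K G p y iH iK) {α : VH → ℝ} {β : VK → ℝ}
    {γ : VG → ℝ} (hγH : ∀ u, γ (iH u) = α u + (#{i | p i = u} : ℝ) * β y)
    (hγK : ∀ i v, v ≠ y → γ (iK i v) = β v) (a : VH) :
    G.moment γ (iH a) =
      H.moment α a + (∑ v, β v) * ∑ j, (H.dist a (p j) : ℝ) + r * K.moment β y := by
  have hcopy (j : Fin r) : ∑ v ∈ univ.erase y, γ (iK j v) * G.dist (iH a) (iK j v) =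
      (∑ v ∈ univ.erase y, β v) * H.dist a (p j) + K.moment β y := by
    rw [moment, ← sum_erase univ (f := fun v => β v * (K.dist y v : ℝ)) (a := y) (by simp),
      sum_mul, ← sum_add_distrib]
    refine sum_congr rfl fun v hv => ?_
    rw [hγK j v (ne_of_mem_erase hv), hG.dist_base_copy]
    push_cast
    ring
  have hβ : β y + ∑ v ∈ univ.erase y, β v = ∑ v, β v := add_sum_erase _ _ (mem_univ y)
  rw [moment, hG.sum_eq]
  simp only [moment, hγH, hG.dist_base, hcopy, add_mul, mul_assoc, sum_add_distrib,
    sum_card_filter_mul, sum_const, card_univ, Fintype.card_fin, nsmul_eq_mul, ← mul_sum, ← hβ]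
  ring

theorem moment_copy (hG : IsGraft H K G p y iH iK) {β : VK → ℝ} {γ : VG → ℝ}
    (hγK : ∀ i v, v ≠ y → γ (iK i v) = β v) (i : Fin r) (v : VK) :
    G.moment γ (iK i v) = G.moment γ (iH (p i)) + K.dist v y * (∑ w, γ w - ∑ v', β v')
      + K.moment β v - K.moment β y := by
  have key : ∑ w, γ w * ((G.dist (iK i v) w : ℝ) - G.dist (iH (p i)) w - K.dist v y) =
      ∑ v' ∈ univ.erase y, β v' * ((K.dist v v' : ℝ) - K.dist v y - K.dist y v') := by
    rw [hG.sum_eq, sum_eq_zero, zero_add, sum_eq_single i]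
    · refine sum_congr rfl fun v' hv' => ?_
      rw [hγK i v' (ne_of_mem_erase hv'), hG.dist_copy, hG.dist_base_copy, dist_self]
      push_cast
      ring
    · intro j _ hji
      refine sum_eq_zero fun v' _ => ?_
      rw [hG.dist_copy_copy i j v v' hji.symm, hG.dist_base_copy]
      push_cast
      ring
    · simp
    · intro u _
      rw [dist_comm, hG.dist_base_copy, hG.dist_base, H.dist_comm, K.dist_comm]
      push_cast
      ring
  have hcorr : ∑ v' ∈ univ.erase y, β v' * ((K.dist v v' : ℝ) - K.dist v y - K.dist y v') =
      K.moment β v - (∑ v', β v') * K.dist v y - K.moment β y := by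
    rw [sum_erase univ (by simp), moment, moment, sum_mul, ← sum_sub_distrib, ← sum_sub_distrib]
    exact sum_congr rfl fun v' _ => by ring
  rw [hcorr] at key
  simp only [mul_sub, sum_sub_distrib, ← sum_mul] at key
  rw [moment, moment]
  linarith

theorem sum_moment_copy (hG : IsGraft H K G p y iH iK) {β : VK → ℝ} {γ : VG → ℝ}
    (hγK : ∀ i v, v ≠ y → γ (iK i v) = β v) (i : Fin r) :
    ∑ v ∈ univ.erase y, G.moment γ (iK i v) =
      (Fintype.card VK - 1) * G.moment γ (iH (p i)) +
        ∑ v, (K.dist v y * (∑ w, γ w - ∑ v', β v') + K.moment β v - K.moment β y) := by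
  have hcard : ((univ.erase y).card : ℝ) = Fintype.card VK - 1 := by
    rw [card_erase_of_mem (mem_univ y), card_univ, Nat.cast_pred (Fintype.card_pos_iff.2 ⟨y⟩)]
  rw [← sum_erase univ (a := y) (by simp), ← hcard, ← nsmul_eq_mul, ← sum_const,
    ← sum_add_distrib]
  exact sum_congr rfl fun v _ => by rw [hG.moment_copy hγK]; ring

theorem sum_moment_eq [DecidableEq VH] (hG : IsGraft H K G p y iH iK) {α : VH → ℝ}
    {β : VK → ℝ} {γ : VG → ℝ} (hγH : ∀ u, γ (iH u) = α u + (#{i | p i = u} : ℝ) * β y)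
    (hγK : ∀ i v, v ≠ y → γ (iK i v) = β v) :
    ∑ w, G.moment γ w =
      ∑ u, H.moment α u
      + r * ((Fintype.card VH + (Fintype.card VK - 1) * r) * K.moment β y
        + ∑ v, (K.dist v y * (∑ u, α u + (r - 1) * ∑ v', β v') + K.moment β v - K.moment β y))
      + ∑ j, H.moment (fun u => (Fintype.card VK - 1) * α u + ∑ v, β v) (p j)
      + (∑ v, β v) * (Fintype.card VK - 1) * ∑ i, ∑ j, (H.dist (p i) (p j) : ℝ) := by
  have hξ (a : VH) : H.moment (fun u => (Fintype.card VK - 1) * α u + ∑ v, β v) a =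
      (Fintype.card VK - 1) * H.moment α a + (∑ v, β v) * ∑ u, (H.dist a u : ℝ) := by
    simp only [moment, add_mul, sum_add_distrib, mul_sum, mul_assoc]
  have hswap : ∑ u, ∑ j, (H.dist u (p j) : ℝ) = ∑ j, ∑ u, (H.dist (p j) u : ℝ) := by
    rw [sum_comm]
    simp only [H.dist_comm]
  have hweight : ∑ w, γ w - ∑ v, β v = ∑ u, α u + (r - 1) * ∑ v, β v := by
    rw [hG.sum_weight hγH hγK]
    ring
  rw [hG.sum_eq]
  simp only [hG.sum_moment_copy hγK, hweight, hG.moment_base hγH hγK, hξ]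
  simp only [sum_add_distrib, ← mul_sum, sum_const, card_univ, Fintype.card_fin, nsmul_eq_mul,
    hswap]
  ring

end IsGraft

end SimpleGraph

theorem graft_moment_comparison_general
    {r : ℕ} {VH VK VG1 VG2 : Type*}
    [Fintype VH] [Fintype VK] [Fintype VG1] [Fintype VG2] [DecidableEq VH]
    (H : SimpleGraph VH) (K : SimpleGraph VK)
    (G1 : SimpleGraph VG1) (G2 : SimpleGraph VG2)
    (x1 : Fin r → VH) (x : VH) (y : VK)
    (α : VH → ℝ) (β : VK → ℝ)
    (iH1 : VH → VG1) (iK1 : Fin r → VK → VG1)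
    (hiH1 : Function.Injective iH1) (hiK1 : ∀ i, Function.Injective (iK1 i))
    (hxy1 : ∀ i, iH1 (x1 i) = iK1 i y)
    (hcover1 : ∀ w : VG1, (∃ u, w = iH1 u) ∨ (∃ i v, w = iK1 i v))
    (hdisjHK1 : ∀ i u v, iH1 u = iK1 i v → u = x1 i ∧ v = y)
    (hdisjKK1 : ∀ i j v v', i ≠ j → iK1 i v = iK1 j v' → v = y ∧ v' = y)
    (hdH1 : ∀ u u', G1.dist (iH1 u) (iH1 u') = H.dist u u')
    (hdK1 : ∀ i v v', G1.dist (iK1 i v) (iK1 i v') = K.dist v v')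
    (hcross1 : ∀ i u v, G1.dist (iH1 u) (iK1 i v) = H.dist u (x1 i) + K.dist y v)
    (hcrossKK1 : ∀ i j v v', i ≠ j →
      G1.dist (iK1 i v) (iK1 j v') =
        K.dist v y + H.dist (x1 i) (x1 j) + K.dist y v')
    (γ1 : VG1 → ℝ)
    (hγH1 : ∀ u : VH,
      γ1 (iH1 u) = α u + ((Finset.univ.filter (fun i : Fin r => x1 i = u)).card : ℝ) * β y)
    (hγK1 : ∀ i v, v ≠ y → γ1 (iK1 i v) = β v)
    (iH2 : VH → VG2) (iK2 : Fin r → VK → VG2)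
    (hiH2 : Function.Injective iH2) (hiK2 : ∀ i, Function.Injective (iK2 i))
    (hxy2 : ∀ i, iH2 ((fun _ => x) i) = iK2 i y)
    (hcover2 : ∀ w : VG2, (∃ u, w = iH2 u) ∨ (∃ i v, w = iK2 i v))
    (hdisjHK2 : ∀ i u v, iH2 u = iK2 i v → u = (fun _ => x) i ∧ v = y)
    (hdisjKK2 : ∀ i j v v', i ≠ j → iK2 i v = iK2 j v' → v = y ∧ v' = y)
    (hdH2 : ∀ u u', G2.dist (iH2 u) (iH2 u') = H.dist u u')
    (hdK2 : ∀ i v v', G2.dist (iK2 i v) (iK2 i v') = K.dist v v')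
    (hcross2 : ∀ i u v, G2.dist (iH2 u) (iK2 i v) = H.dist u ((fun _ => x) i) + K.dist y v)
    (hcrossKK2 : ∀ i j v v', i ≠ j →
      G2.dist (iK2 i v) (iK2 j v') =
        K.dist v y + H.dist ((fun _ => x) i) ((fun _ => x) j) + K.dist y v')
    (γ2 : VG2 → ℝ)
    (hγH2 : ∀ u : VH,
      γ2 (iH2 u) = α u + ((Finset.univ.filter (fun i : Fin r => (fun _ => x) i = u)).card : ℝ) * β y)
    (hγK2 : ∀ i v, v ≠ y → γ2 (iK2 i v) = β v)
    :
    (∑ w : VG2, ∑ w' : VG2, γ2 w' * (G2.dist w w' : ℝ))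
      - (∑ w : VG1, ∑ w' : VG1, γ1 w' * (G1.dist w w' : ℝ)) =
    (∑ i : Fin r,
        ((∑ u : VH, (((Fintype.card VK : ℝ) - 1) * α u + ∑ v : VK, β v)
            * (H.dist u x : ℝ))
         - (∑ u : VH, (((Fintype.card VK : ℝ) - 1) * α u + ∑ v : VK, β v)
            * (H.dist u (x1 i) : ℝ))))
      - (∑ v : VK, β v) * ((Fintype.card VK : ℝ) - 1)
          * (∑ i : Fin r, ∑ j : Fin r, (H.dist (x1 i) (x1 j) : ℝ)) := by
  classical
  have h1 : H.IsGraft K G1 x1 y iH1 iK1 :=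
    ⟨hiH1, hiK1, hxy1, hcover1, hdisjHK1, hdisjKK1, hdH1, hdK1, hcross1, hcrossKK1⟩
  have h2 : H.IsGraft K G2 (fun _ => x) y iH2 iK2 :=
    ⟨hiH2, hiK2, hxy2, hcover2, hdisjHK2, hdisjKK2, hdH2, hdK2, hcross2, hcrossKK2⟩
  have hM (a : VH) : H.moment (fun u => (Fintype.card VK - 1) * α u + ∑ v, β v) a =
      ∑ u, ((Fintype.card VK - 1) * α u + ∑ v, β v) * (H.dist u a : ℝ) :=
    sum_congr rfl fun u _ => by rw [H.dist_comm]
  change ∑ w, G2.moment γ2 w - ∑ w, G1.moment γ1 w = _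
  rw [h1.sum_moment_eq hγH1 hγK1, h2.sum_moment_eq hγH2 hγK2]
  simp only [hM, SimpleGraph.dist_self, Nat.cast_zero, sum_const_zero, mul_zero, sum_sub_distrib]
  ring

/-- Comparison of moments: `G₁` attaches `r` copies of `K` (rooted at `y`) at the
distinct vertices `x₁,…,x_r` of `H`, while `G₂` attaches all `r` copies at a single
vertex `x`. Then, with `ξ = (|V_K|−1)α + B`,
`M_{G₂}^γ − M_{G₁}^γ = Σ_i [M_H^ξ(x) − M_H^ξ(x_i)] − B(|V_K|−1)·Σ_{i,j} dist_H(x_i,x_j)`;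
in particular the difference depends on `K` only through `|V_K|` and `B`. -/
theorem graft_moment_comparison
    {r : ℕ} {VH VK VG1 VG2 : Type*}
    [Fintype VH] [Fintype VK] [Fintype VG1] [Fintype VG2] [DecidableEq VH]
    (H : SimpleGraph VH) (K : SimpleGraph VK)
    (G1 : SimpleGraph VG1) (G2 : SimpleGraph VG2)
    (hH : H.Connected) (hK : K.Connected)
    (x1 : Fin r → VH) (hx1 : Function.Injective x1) (x : VH) (y : VK)
    (α : VH → ℝ) (β : VK → ℝ) (hα : ∀ u, 0 ≤ α u) (hβ : ∀ v, 0 ≤ β v)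
    (iH1 : VH → VG1) (iK1 : Fin r → VK → VG1)
    (hiH1 : Function.Injective iH1) (hiK1 : ∀ i, Function.Injective (iK1 i))
    (hxy1 : ∀ i, iH1 (x1 i) = iK1 i y)
    (hcover1 : ∀ w : VG1, (∃ u, w = iH1 u) ∨ (∃ i v, w = iK1 i v))
    (hdisjHK1 : ∀ i u v, iH1 u = iK1 i v → u = x1 i ∧ v = y)
    (hdisjKK1 : ∀ i j v v', i ≠ j → iK1 i v = iK1 j v' → v = y ∧ v' = y)
    (hdH1 : ∀ u u', G1.dist (iH1 u) (iH1 u') = H.dist u u')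
    (hdK1 : ∀ i v v', G1.dist (iK1 i v) (iK1 i v') = K.dist v v')
    (hcross1 : ∀ i u v, G1.dist (iH1 u) (iK1 i v) = H.dist u (x1 i) + K.dist y v)
    (hcrossKK1 : ∀ i j v v', i ≠ j →
      G1.dist (iK1 i v) (iK1 j v') =
        K.dist v y + H.dist (x1 i) (x1 j) + K.dist y v')
    (γ1 : VG1 → ℝ)
    (hγH1 : ∀ u : VH,
      γ1 (iH1 u) = α u + ((Finset.univ.filter (fun i : Fin r => x1 i = u)).card : ℝ) * β y)
    (hγK1 : ∀ i v, v ≠ y → γ1 (iK1 i v) = β v)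
    (iH2 : VH → VG2) (iK2 : Fin r → VK → VG2)
    (hiH2 : Function.Injective iH2) (hiK2 : ∀ i, Function.Injective (iK2 i))
    (hxy2 : ∀ i, iH2 ((fun _ => x) i) = iK2 i y)
    (hcover2 : ∀ w : VG2, (∃ u, w = iH2 u) ∨ (∃ i v, w = iK2 i v))
    (hdisjHK2 : ∀ i u v, iH2 u = iK2 i v → u = (fun _ => x) i ∧ v = y)
    (hdisjKK2 : ∀ i j v v', i ≠ j → iK2 i v = iK2 j v' → v = y ∧ v' = y)
    (hdH2 : ∀ u u', G2.dist (iH2 u) (iH2 u') = H.dist u u')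
    (hdK2 : ∀ i v v', G2.dist (iK2 i v) (iK2 i v') = K.dist v v')
    (hcross2 : ∀ i u v, G2.dist (iH2 u) (iK2 i v) = H.dist u ((fun _ => x) i) + K.dist y v)
    (hcrossKK2 : ∀ i j v v', i ≠ j →
      G2.dist (iK2 i v) (iK2 j v') =
        K.dist v y + H.dist ((fun _ => x) i) ((fun _ => x) j) + K.dist y v')
    (γ2 : VG2 → ℝ)
    (hγH2 : ∀ u : VH,
      γ2 (iH2 u) = α u + ((Finset.univ.filter (fun i : Fin r => (fun _ => x) i = u)).card : ℝ) * β y)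
    (hγK2 : ∀ i v, v ≠ y → γ2 (iK2 i v) = β v)
    :
    (∑ w : VG2, ∑ w' : VG2, γ2 w' * (G2.dist w w' : ℝ))
      - (∑ w : VG1, ∑ w' : VG1, γ1 w' * (G1.dist w w' : ℝ)) =
    (∑ i : Fin r,
        ((∑ u : VH, (((Fintype.card VK : ℝ) - 1) * α u + ∑ v : VK, β v)
            * (H.dist u x : ℝ))
         - (∑ u : VH, (((Fintype.card VK : ℝ) - 1) * α u + ∑ v : VK, β v)
            * (H.dist u (x1 i) : ℝ))))
      - (∑ v : VK, β v) * ((Fintype.card VK : ℝ) - 1)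
          * (∑ i : Fin r, ∑ j : Fin r, (H.dist (x1 i) (x1 j) : ℝ)) :=
  graft_moment_comparison_general H K G1 G2 x1 x y α β iH1 iK1 hiH1 hiK1 hxy1 hcover1 hdisjHK1
    hdisjKK1 hdH1 hdK1 hcross1 hcrossKK1 γ1 hγH1 hγK1 iH2 iK2 hiH2 hiK2 hxy2 hcover2 hdisjHK2
    hdisjKK2 hdH2 hdK2 hcross2 hcrossKK2 γ2 hγH2 hγK2
end
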